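/- Let U be an n×n unitary complex matrix and ρ an n×n Hermitian complex matrix. Then Tr(UρUᴴρ) is a real number satisfying Tr(UρUᴴρ) ≤ Tr(ρ²), with equality if and only if UρUᴴ = ρ. Consequently, for the quantum Poisson semigroup generator L(ρ) := UρUᴴ − ρ, the Lie derivative of the purity F(ρ) = Tr(ρ²)/2 along the GKLS vector field satisfies Tr(L(ρ)·ρ) ≤ 0, i.e. the purity is a LaSalle function for quantum Poisson semigroups, and it is stationary exactly at the matrices commuting with U. -/

import Mathlib

open Matrix
open scoped ComplexOrder

/-!
The matrix `A := UρUᴴ` is Hermitian and unitarily equivalent to `ρ`, so `Tr(A²) = Tr(ρ²)`.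
Expanding the Hilbert–Schmidt norm of `A - ρ` then gives
`0 ≤ Tr((A - ρ)ᴴ(A - ρ)) = 2 (Tr(ρ²) - Tr(Aρ))`, with equality exactly when `A = ρ`;
and `A = ρ` says that `U` commutes with `ρ`.
-/

namespace Matrix

variable {m R : Type*} [Fintype m]

section CommRing

variable [CommRing R] [StarRing R]

lemma trace_mul_mul_conjTranspose_of_conjTranspose_mul_eq_one [DecidableEq m] {U : Matrix m m R}
    (hU : Uᴴ * U = 1) (M : Matrix m m R) : trace (U * M * Uᴴ) = trace M := by
  rw [trace_mul_cycle, hU, one_mul]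

lemma mul_mul_conjTranspose_eq_iff_commute [DecidableEq m] {U : Matrix m m R}
    (hU : Uᴴ * U = 1) (ρ : Matrix m m R) : U * ρ * Uᴴ = ρ ↔ Commute U ρ := by
  have hU' : U * Uᴴ = 1 := mul_eq_one_comm.mp hU
  constructor
  · intro h
    calc U * ρ = U * ρ * Uᴴ * U := by rw [Matrix.mul_assoc _ Uᴴ, hU, Matrix.mul_one]
      _ = ρ * U := by rw [h]
  · intro h
    rw [h.eq, Matrix.mul_assoc, hU', Matrix.mul_one]

namespace IsHermitian

variable {A B : Matrix m m R}

lemma isSelfAdjoint_trace_mul (hA : A.IsHermitian) (hB : B.IsHermitian) :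
    IsSelfAdjoint (A * B).trace := by
  rw [IsSelfAdjoint, ← trace_conjTranspose, conjTranspose_mul, hA.eq, hB.eq, trace_mul_comm]

lemma trace_conjTranspose_sub_mul_sub (hA : A.IsHermitian) (hB : B.IsHermitian) :
    trace ((A - B)ᴴ * (A - B)) = trace (A * A) + trace (B * B) - 2 * trace (A * B) := by
  rw [(hA.sub hB).eq, sub_mul, mul_sub, mul_sub, trace_sub, trace_sub, trace_sub,
    trace_mul_comm B A]
  ring

end IsHermitian

end CommRing

namespace IsHermitian

variable {A B : Matrix m m ℂ}

lemma trace_conjTranspose_sub_mul_sub_of_trace_mul_self_eq (hA : A.IsHermitian)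
    (hB : B.IsHermitian) (h : trace (A * A) = trace (B * B)) :
    trace ((A - B)ᴴ * (A - B)) = 2 * (trace (B * B) - trace (A * B)) := by
  rw [hA.trace_conjTranspose_sub_mul_sub hB, h]
  ring

lemma trace_mul_le_of_trace_mul_self_eq (hA : A.IsHermitian) (hB : B.IsHermitian)
    (h : trace (A * A) = trace (B * B)) : trace (A * B) ≤ trace (B * B) := by
  have hnonneg := (posSemidef_conjTranspose_mul_self (A - B)).trace_nonneg
  rw [hA.trace_conjTranspose_sub_mul_sub_of_trace_mul_self_eq hB h] at hnonneg
  rw [← sub_nonneg]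
  exact le_of_mul_le_mul_left (by rwa [mul_zero]) two_pos

lemma trace_mul_eq_iff_of_trace_mul_self_eq (hA : A.IsHermitian) (hB : B.IsHermitian)
    (h : trace (A * A) = trace (B * B)) : trace (A * B) = trace (B * B) ↔ A = B := by
  rw [← sub_eq_zero (a := A), ← trace_conjTranspose_mul_self_eq_zero_iff,
    hA.trace_conjTranspose_sub_mul_sub_of_trace_mul_self_eq hB h, mul_eq_zero, sub_eq_zero,
    eq_comm]
  simp

end IsHermitian

end Matrix

theorem purity_lasalle_quantum_poisson {n : ℕ}
    (U ρ : Matrix (Fin n) (Fin n) ℂ) (hU : Uᴴ * U = 1) (hρ : ρ.IsHermitian) :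
    (Matrix.trace (U * ρ * Uᴴ * ρ)).im = 0 ∧
    Matrix.trace (U * ρ * Uᴴ * ρ) ≤ Matrix.trace (ρ * ρ) ∧
    (Matrix.trace (U * ρ * Uᴴ * ρ) = Matrix.trace (ρ * ρ) ↔ U * ρ * Uᴴ = ρ) ∧
    Matrix.trace ((U * ρ * Uᴴ - ρ) * ρ) ≤ 0 ∧
    (Matrix.trace ((U * ρ * Uᴴ - ρ) * ρ) = 0 ↔ U * ρ = ρ * U) := by
  have hA : (U * ρ * Uᴴ).IsHermitian := isHermitian_mul_mul_conjTranspose U hρ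
  have hAA : trace (U * ρ * Uᴴ * (U * ρ * Uᴴ)) = trace (ρ * ρ) := by
    rw [← trace_mul_mul_conjTranspose_of_conjTranspose_mul_eq_one hU (ρ * ρ)]
    congr 1
    calc U * ρ * Uᴴ * (U * ρ * Uᴴ) = U * ρ * (Uᴴ * U) * ρ * Uᴴ := by noncomm_ring
      _ = U * (ρ * ρ) * Uᴴ := by rw [hU, Matrix.mul_one, Matrix.mul_assoc U ρ ρ]
  have hle := hA.trace_mul_le_of_trace_mul_self_eq hρ hAA
  have heq := hA.trace_mul_eq_iff_of_trace_mul_self_eq hρ hAA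
  have htrace_L : trace ((U * ρ * Uᴴ - ρ) * ρ) = trace (U * ρ * Uᴴ * ρ) - trace (ρ * ρ) := by
    rw [sub_mul, trace_sub]
  refine ⟨Complex.conj_eq_iff_im.mp (hA.isSelfAdjoint_trace_mul hρ), hle, heq,
    htrace_L ▸ sub_nonpos.mpr hle, ?_⟩
  rw [htrace_L, sub_eq_zero, heq, mul_mul_conjTranspose_eq_iff_commute hU, commute_iff_eq]
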